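/- Let f,g ∈ 𝒜 with ∥f∥_∞ < 1/2 and ∥g∥_∞ < 1/2. Then the series G(t) := Σ_{m≥0} t^m S_m(f,g)/(m!)² converges absolutely for every t ∈ [0,1]; moreover, for every integer n ≥ 1, G is n times differentiable on [0,1], its n-th derivative is obtained by termwise differentiation, G^{(n)}(t) = Σ_{m≥n} t^{m−n} S_m(f,g)/(m!(m−n)!), and in particular S_n(f,g) = n! · G^{(n)}(0). (This is Lemma 2 of the paper: ⟨B_f^{+n}Φ, B_g^{+n}Φ⟩ = n! (d^n/dt^n)|_{t=0} ⟨Ψ(tf),Ψ(g)⟩.) -/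

import Mathlib

open MeasureTheory Complex Finset
open scoped Nat ENNReal

noncomputable section

/-- The domain `ℝ^d`. -/
abbrev Dom (d : ℕ) := Fin d → ℝ

/-- Membership in `𝒜 = L²(ℝ^d) ∩ L^∞(ℝ^d)`. -/
def MemA (d : ℕ) (f : Dom d → ℂ) : Prop :=
  MemLp f 2 (volume : Measure (Dom d)) ∧ MemLp f ⊤ (volume : Measure (Dom d))

/-- `⟨f^k, g^k⟩`, the power inner products. -/
def pip (d : ℕ) (f g : Dom d → ℂ) (k : ℕ) : ℂ :=
  ∫ x : Dom d, (starRingEnd ℂ) (f x) ^ k * g x ^ k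

/-- `S_n(f,g)`, the inner product of quadratic `n`-particle vectors. -/
def Sker (c : ℝ) (d : ℕ) (f g : Dom d → ℂ) (n : ℕ) : ℂ :=
  ∑ p : Nat.Partition n,
    (n ! : ℂ) ^ 2 * 2 ^ (2 * n - 1) *
      ∏ j ∈ p.parts.toFinset,
        (c : ℂ) ^ p.parts.count j /
            (((p.parts.count j)! : ℂ) * (j : ℂ) ^ p.parts.count j) *
          pip d f g j ^ p.parts.count j

/-- `K(f,g) = ⟨Ψ(f),Ψ(g)⟩`, the inner product of quadratic exponential vectors. -/
def Kker (c : ℝ) (d : ℕ) (f g : Dom d → ℂ) : ℂ :=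
  Complex.exp (-(c / 2 : ℂ) *
    ∫ x : Dom d, Complex.log (1 - 4 * (starRingEnd ℂ) (f x) * g x))

/-!
`S_n = (n!)² 2^{2n-1} ∑_{λ ⊢ n} ∏ⱼ xⱼ^{iⱼ} / iⱼ!` with `xⱼ = c ⟨fʲ, gʲ⟩ / j`, and the partition sum is
the coefficient of `tⁿ` in `exp (∑ⱼ xⱼ tʲ)`. The pointwise bounds `|f|, |g| ≤ s < 1/2` give
`|⟨fʲ, gʲ⟩| ≤ ‖f g‖₁ s^{2(j-1)}`; rescaling by `τⁿ` with `s² < τ < 1/4` and comparing the partition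
sum with `∏ⱼ exp (|xⱼ| / τʲ)` yields `|S_n| / (n!)² ≤ A (4τ)ⁿ`. Hence `G` is a power series with
radius of convergence `> 1`; on `[0, 1]` it can be differentiated termwise any number of times, and
its `n`-th derivative at `0` is `n!` times its `n`-th coefficient.
-/

def derivCoeffs (b : ℕ → ℂ) (m : ℕ) : ℂ := (m + 1) * b (m + 1)

def GeomDecay (b : ℕ → ℂ) : Prop := ∃ A q : ℝ, 0 ≤ q ∧ q < 1 ∧ ∀ m, ‖b m‖ ≤ A * q ^ m

def evalSeries (b : ℕ → ℂ) (t : ℝ) : ℂ := ∑' m, (t : ℂ) ^ m * b m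

lemma iterate_derivCoeffs_apply (b : ℕ → ℂ) (n m : ℕ) :
    derivCoeffs^[n] b m = ((m + n)! / m ! : ℂ) * b (m + n) := by
  induction n generalizing m with
  | zero => simp [Nat.factorial_ne_zero]
  | succ n ih =>
    rw [Function.iterate_succ_apply', derivCoeffs, ih, Nat.factorial_succ m,
      show m + 1 + n = m + (n + 1) by ring]
    push_cast
    field_simp

lemma evalSeries_zero (b : ℕ → ℂ) : evalSeries b 0 = b 0 := by
  rw [evalSeries, tsum_eq_single 0 fun m hm => by simp [hm]]
  simp

namespace GeomDecay

variable {b : ℕ → ℂ}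

lemma summable_norm (hb : GeomDecay b) {x : ℂ} (hx : ‖x‖ ≤ 1) :
    Summable fun m => ‖x ^ m * b m‖ := by
  obtain ⟨A, q, hq0, hq1, hb⟩ := hb
  have hxq : ‖x‖ * q < 1 := by nlinarith [norm_nonneg x]
  refine .of_nonneg_of_le (fun _ => norm_nonneg _) (fun m => ?_)
    ((summable_geometric_of_lt_one (by positivity) hxq).mul_left A)
  calc ‖x ^ m * b m‖ = ‖x‖ ^ m * ‖b m‖ := by rw [norm_mul, norm_pow]
    _ ≤ ‖x‖ ^ m * (A * q ^ m) := by gcongr; exact hb m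
    _ = A * (‖x‖ * q) ^ m := by ring

/-- `(m + 1) r ^ m` is bounded for `0 ≤ r < 1`, so differentiating only costs a slight increase
of the ratio `q`. -/
lemma derivCoeffs (hb : GeomDecay b) : GeomDecay (derivCoeffs b) := by
  obtain ⟨A, q, hq0, hq1, hb⟩ := hb
  set q' := (1 + q) / 2 with hq'_def
  have hq' : 0 < q' := by positivity
  set r := q / q'
  have hr0 : 0 ≤ r := by positivity
  have hr1 : r < 1 := (div_lt_one hq').2 (by linarith [hq'_def])
  have hsum : Summable fun k : ℕ => ((k : ℝ) + 1) * r ^ k := by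
    have := (summable_pow_mul_geometric_of_norm_lt_one 1
      (by rwa [Real.norm_of_nonneg hr0])).add (summable_geometric_of_lt_one hr0 hr1)
    simpa [add_mul] using this
  refine ⟨A * q * ∑' k : ℕ, ((k : ℝ) + 1) * r ^ k, q', hq'.le, by linarith [hq'_def],
    fun m => ?_⟩
  have hle : ((m : ℝ) + 1) * r ^ m ≤ ∑' k : ℕ, ((k : ℝ) + 1) * r ^ k :=
    hsum.le_tsum m fun k _ => by positivity
  have hA : 0 ≤ A := (norm_nonneg _).trans (by simpa using hb 0)
  calc ‖(m + 1 : ℂ) * b (m + 1)‖ = ((m : ℝ) + 1) * ‖b (m + 1)‖ := by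
        rw [norm_mul]; norm_cast
    _ ≤ ((m : ℝ) + 1) * (A * q ^ (m + 1)) := by gcongr; exact hb _
    _ = A * q * (((m : ℝ) + 1) * r ^ m) * q' ^ m := by
        rw [div_pow, pow_succ]; field_simp
    _ ≤ _ := by gcongr

lemma iterate_derivCoeffs (hb : GeomDecay b) (n : ℕ) :
    GeomDecay (_root_.derivCoeffs^[n] b) := by
  induction n with
  | zero => exact hb
  | succ n ih => rw [Function.iterate_succ_apply']; exact ih.derivCoeffs

/-- On the ball of radius `r = 2 / (1 + q) > 1` the differentiated series is dominated by
`A m (r q) ^ m`, and `r q < 1`. -/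
lemma hasDerivAt_evalSeries (hb : GeomDecay b) {x : ℝ} (hx : |x| ≤ 1) :
    HasDerivAt (evalSeries b) (evalSeries (_root_.derivCoeffs b) x) x := by
  obtain ⟨A, q, hq0, hq1, hb⟩ := hb
  set r := 2 / (1 + q) with hr_def
  have hr1 : 1 < r := by rw [hr_def, lt_div_iff₀ (by positivity)]; linarith
  have hrq0 : 0 ≤ r * q := by positivity
  have hrq1 : r * q < 1 := by
    rw [hr_def, div_mul_eq_mul_div, div_lt_one (by positivity)]; linarith
  have hu : Summable fun m : ℕ => A * ((m : ℝ) ^ 1 * (r * q) ^ m) :=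
    (summable_pow_mul_geometric_of_norm_lt_one 1 (by rwa [Real.norm_of_nonneg hrq0])).mul_left A
  have hderiv : ∀ (m : ℕ) (t : ℝ), t ∈ Metric.ball 0 r →
      HasDerivAt (fun t : ℝ => (t : ℂ) ^ m * b m) ((m : ℂ) * (t : ℂ) ^ (m - 1) * b m) t :=
    fun m t _ => ((hasDerivAt_pow m (t : ℂ)).comp_ofReal).mul_const (b m)
  have hbound : ∀ (m : ℕ) (t : ℝ), t ∈ Metric.ball 0 r →
      ‖(m : ℂ) * (t : ℂ) ^ (m - 1) * b m‖ ≤ A * ((m : ℝ) ^ 1 * (r * q) ^ m) := by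
    intro m t ht
    rw [mem_ball_zero_iff, Real.norm_eq_abs] at ht
    have htm : |t| ^ (m - 1) ≤ r ^ m :=
      (pow_le_pow_left₀ (abs_nonneg t) ht.le _).trans (pow_le_pow_right₀ hr1.le (m.sub_le 1))
    calc ‖(m : ℂ) * (t : ℂ) ^ (m - 1) * b m‖ = m * |t| ^ (m - 1) * ‖b m‖ := by
          simp [norm_pow]
      _ ≤ m * r ^ m * (A * q ^ m) := by gcongr; exact hb m
      _ = A * ((m : ℝ) ^ 1 * (r * q) ^ m) := by ring
  have hx' : x ∈ Metric.ball (0 : ℝ) r := by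
    rw [mem_ball_zero_iff, Real.norm_eq_abs]; linarith
  have hsum0 : Summable fun m => ((0 : ℝ) : ℂ) ^ m * b m :=
    summable_of_ne_finset_zero (s := {0}) fun m hm => by simp_all
  refine (hasDerivAt_tsum_of_isPreconnected hu Metric.isOpen_ball
    (convex_ball (0 : ℝ) r).isPreconnected hderiv hbound (Metric.mem_ball_self (by linarith))
    hsum0 hx').congr_deriv ?_
  rw [(Summable.of_norm_bounded hu fun m => hbound m x hx').tsum_eq_zero_add, Nat.cast_zero,
    zero_mul, zero_mul, zero_add]
  exact tsum_congr fun m => by rw [_root_.derivCoeffs, Nat.add_sub_cancel]; push_cast; ring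

lemma iteratedDerivWithin_evalSeries (hb : GeomDecay b) {s : Set ℝ}
    (hs : UniqueDiffOn ℝ s) (hs1 : s ⊆ Set.Icc (-1) 1) (n : ℕ) :
    Set.EqOn (iteratedDerivWithin n (evalSeries b) s)
      (evalSeries (_root_.derivCoeffs^[n] b)) s := by
  induction n with
  | zero => exact fun t _ => rfl
  | succ n ih =>
    intro t ht
    rw [iteratedDerivWithin_succ, derivWithin_congr ih (ih ht), Function.iterate_succ_apply']
    exact ((hb.iterate_derivCoeffs n).hasDerivAt_evalSeries
      (abs_le.2 (hs1 ht))).hasDerivWithinAt.derivWithin (hs t ht)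

end GeomDecay

lemma Nat.Partition.sum_mul_count {n : ℕ} (p : n.Partition) :
    ∑ j ∈ p.parts.toFinset, j * p.parts.count j = n := by
  classical
  simp_rw [mul_comm _ (p.parts.count _), ← smul_eq_mul, ← Finset.sum_multiset_count, p.parts_sum]

lemma Nat.Partition.count_le {n : ℕ} (p : n.Partition) (j : ℕ) : p.parts.count j ≤ n :=
  calc p.parts.count j ≤ Multiset.card p.parts := Multiset.count_le_card _ _
    _ = Multiset.card p.parts • 1 := by simp
    _ ≤ p.parts.sum := Multiset.card_nsmul_le_sum fun _ hx => p.parts_pos hx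
    _ = n := p.parts_sum

lemma Nat.Partition.injective_count_succ (n : ℕ) :
    Function.Injective fun (p : n.Partition) (i : Fin n) => p.parts.count ((i : ℕ) + 1) := by
  intro p₁ p₂ h
  ext j
  rcases j with _ | j
  · rw [Multiset.count_eq_zero.2 fun h => (p₁.parts_pos h).false,
      Multiset.count_eq_zero.2 fun h => (p₂.parts_pos h).false]
  by_cases hj : j < n
  · exact congrFun h ⟨j, hj⟩
  · rw [Multiset.count_eq_zero.2 fun h => hj (p₁.le_of_mem_parts h),
      Multiset.count_eq_zero.2 fun h => hj (p₂.le_of_mem_parts h)]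

lemma Nat.Partition.prod_count_eq_prod_fin {M : Type*} [CommMonoid M] {n : ℕ} (p : n.Partition)
    (w : ℕ → ℕ → M) (hw : ∀ j, w j 0 = 1) :
    ∏ j ∈ p.parts.toFinset, w j (p.parts.count j) =
      ∏ i : Fin n, w ((i : ℕ) + 1) (p.parts.count ((i : ℕ) + 1)) := by
  have hsub : p.parts.toFinset ⊆ (range n).image (· + 1) := by
    intro j hj
    rw [Multiset.mem_toFinset] at hj
    have := p.parts_pos hj
    have := p.le_of_mem_parts hj
    exact mem_image.2 ⟨j - 1, mem_range.2 (by omega), by omega⟩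
  rw [prod_subset hsub fun j _ hj => by rw [Multiset.count_eq_zero.2 (by simpa using hj), hw],
    prod_image (by simp), Fin.prod_univ_eq_prod_range fun i => w (i + 1) (p.parts.count (i + 1))]

section PartitionSum

variable {𝕜 : Type*}

def partitionSum [Field 𝕜] (n : ℕ) (x : ℕ → 𝕜) : 𝕜 :=
  ∑ p : n.Partition, ∏ j ∈ p.parts.toFinset, x j ^ p.parts.count j / (p.parts.count j)!

lemma partitionSum_pow_mul [Field 𝕜] (n : ℕ) (a : 𝕜) (x : ℕ → 𝕜) :
    partitionSum n (fun j => a ^ j * x j) = a ^ n * partitionSum n x := by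
  rw [partitionSum, partitionSum, mul_sum]
  refine sum_congr rfl fun p _ => ?_
  simp_rw [mul_pow, ← pow_mul, mul_div_assoc, prod_mul_distrib, prod_pow_eq_pow_sum,
    p.sum_mul_count]

/-- Partitions embed into the tuples `(i₁, …, iₙ)` of multiplicities, over which the sum
factorises into truncated exponential series. -/
lemma partitionSum_le_exp (n : ℕ) {y : ℕ → ℝ} (hy : ∀ j, 0 ≤ y j) :
    partitionSum n y ≤ Real.exp (∑ i ∈ range n, y (i + 1)) := by
  classical
  set w : ℕ → ℕ → ℝ := fun j k => y j ^ k / (k ! : ℝ)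
  have hw : ∀ j k, 0 ≤ w j k := fun j k =>
    div_nonneg (pow_nonneg (hy j) k) k.factorial.cast_nonneg
  set e := fun (p : n.Partition) (i : Fin n) => p.parts.count ((i : ℕ) + 1)
  calc partitionSum n y = ∑ p : n.Partition, ∏ i : Fin n, w ((i : ℕ) + 1) (e p i) :=
        sum_congr rfl fun p _ => p.prod_count_eq_prod_fin w fun j => by simp [w]
    _ = ∑ v ∈ univ.image e, ∏ i : Fin n, w ((i : ℕ) + 1) (v i) := by
        rw [sum_image fun p _ q _ h => Nat.Partition.injective_count_succ n h]
    _ ≤ ∑ v ∈ Fintype.piFinset fun _ : Fin n => range (n + 1),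
          ∏ i : Fin n, w ((i : ℕ) + 1) (v i) := by
        refine sum_le_sum_of_subset_of_nonneg ?_ fun v _ _ => prod_nonneg fun i _ => hw _ _
        simp only [subset_iff, mem_image, mem_univ, true_and, Fintype.mem_piFinset, mem_range,
          forall_exists_index, forall_apply_eq_imp_iff]
        exact fun p i => Nat.lt_succ_of_le (p.count_le _)
    _ = ∏ i : Fin n, ∑ k ∈ range (n + 1), w ((i : ℕ) + 1) k := (prod_univ_sum _ _).symm
    _ ≤ ∏ i : Fin n, Real.exp (y (i + 1)) :=
        prod_le_prod (fun i _ => sum_nonneg fun k _ => hw _ _)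
          fun i _ => Real.sum_le_exp_of_nonneg (hy _) _
    _ = Real.exp (∑ i ∈ range n, y (i + 1)) := by
        rw [← Real.exp_sum, Fin.sum_univ_eq_sum_range (fun i => y (i + 1))]

lemma norm_partitionSum_le_exp [RCLike 𝕜] (n : ℕ) (x : ℕ → 𝕜) :
    ‖partitionSum n x‖ ≤ Real.exp (∑ i ∈ range n, ‖x (i + 1)‖) := by
  refine le_trans ?_ (partitionSum_le_exp n fun j => norm_nonneg (x j))
  refine (norm_sum_le _ _).trans (sum_le_sum fun p _ => ?_)
  simp [norm_prod, norm_pow]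

lemma norm_partitionSum_le_of_le_geometric [RCLike 𝕜] (n : ℕ) {x : ℕ → 𝕜}
    {K ρ τ : ℝ} (hρ : 0 ≤ ρ) (hρτ : ρ < τ) (hx : ∀ i, ‖x (i + 1)‖ ≤ K * ρ ^ i) :
    ‖partitionSum n x‖ ≤ τ ^ n * Real.exp (K / (τ - ρ)) := by
  have hτ : 0 < τ := hρ.trans_lt hρτ
  have hK : 0 ≤ K := (norm_nonneg _).trans (by simpa using hx 0)
  have hrescale : x = fun j => (τ : 𝕜) ^ j * ((τ : 𝕜)⁻¹ ^ j * x j) := by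
    ext j
    rw [← mul_assoc, ← mul_pow, mul_inv_cancel₀ (by exact_mod_cast hτ.ne'), one_pow, one_mul]
  have hsum : ∑ i ∈ range n, ‖(τ : 𝕜)⁻¹ ^ (i + 1) * x (i + 1)‖ ≤ K / (τ - ρ) := by
    calc ∑ i ∈ range n, ‖(τ : 𝕜)⁻¹ ^ (i + 1) * x (i + 1)‖
        ≤ ∑ i ∈ range n, K / τ * (ρ / τ) ^ i := sum_le_sum fun i _ => by
          rw [norm_mul, norm_pow, norm_inv, RCLike.norm_ofReal, abs_of_pos hτ, div_pow,
            inv_pow, pow_succ]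
          calc (τ ^ i * τ)⁻¹ * ‖x (i + 1)‖ ≤ (τ ^ i * τ)⁻¹ * (K * ρ ^ i) := by gcongr; exact hx i
            _ = K / τ * (ρ ^ i / τ ^ i) := by field_simp
      _ = K / τ * ∑ i ∈ range n, (ρ / τ) ^ i := (mul_sum _ _ _).symm
      _ ≤ K / τ * (1 / (1 - ρ / τ)) := by
        gcongr
        simpa using geom_sum_Ico_le_of_lt_one (m := 0) (n := n) (by positivity)
          ((div_lt_one hτ).2 hρτ)
      _ = K / (τ - ρ) := by field_simp
  calc ‖partitionSum n x‖ = τ ^ n * ‖partitionSum n fun j => (τ : 𝕜)⁻¹ ^ j * x j‖ := by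
        conv_lhs => rw [hrescale]
        rw [partitionSum_pow_mul, norm_mul, norm_pow, RCLike.norm_ofReal, abs_of_pos hτ]
    _ ≤ τ ^ n * Real.exp (K / (τ - ρ)) := by
        gcongr
        exact (norm_partitionSum_le_exp n _).trans (Real.exp_le_exp.2 hsum)

end PartitionSum

lemma ae_norm_le_of_eLpNorm_top_le {α E : Type*} [MeasurableSpace α] {μ : Measure α}
    [NormedAddCommGroup E] {f : α → E} {s : ℝ} (hs : 0 ≤ s)
    (h : eLpNorm f ∞ μ ≤ ENNReal.ofReal s) :
    ∀ᵐ x ∂μ, ‖f x‖ ≤ s := by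
  filter_upwards [enorm_ae_le_eLpNormEssSup f μ] with x hx
  rw [← eLpNorm_exponent_top, ← ofReal_norm] at hx
  exact (ENNReal.ofReal_le_ofReal_iff hs).1 (hx.trans h)

lemma norm_pip_succ_le {d : ℕ} {f g : Dom d → ℂ} {s : ℝ} (hf : ∀ᵐ x, ‖f x‖ ≤ s)
    (hg : ∀ᵐ x, ‖g x‖ ≤ s) (hfg : Integrable fun x => ‖f x‖ * ‖g x‖) (k : ℕ) :
    ‖pip d f g (k + 1)‖ ≤ (∫ x, ‖f x‖ * ‖g x‖) * (s ^ 2) ^ k := by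
  rw [← integral_mul_const]
  refine norm_integral_le_of_norm_le (hfg.mul_const _) ?_
  filter_upwards [hf, hg] with x hfx hgx
  have hs : 0 ≤ s := (norm_nonneg _).trans hfx
  rw [norm_mul, norm_pow, norm_pow, RCLike.norm_conj, pow_succ, pow_succ, sq, mul_pow]
  calc ‖f x‖ ^ k * ‖f x‖ * (‖g x‖ ^ k * ‖g x‖)
      = ‖f x‖ * ‖g x‖ * (‖f x‖ ^ k * ‖g x‖ ^ k) := by ring
    _ ≤ ‖f x‖ * ‖g x‖ * (s ^ k * s ^ k) := by gcongr

lemma Sker_eq_partitionSum (c : ℝ) (d : ℕ) (f g : Dom d → ℂ) (n : ℕ) :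
    Sker c d f g n =
      (n ! : ℂ) ^ 2 * 2 ^ (2 * n - 1) * partitionSum n fun j => c * pip d f g j / j := by
  rw [Sker, partitionSum, mul_sum]
  refine sum_congr rfl fun p _ => congrArg _ (prod_congr rfl fun j _ => ?_)
  ring

lemma geomDecay_Sker_div_factorial_sq (c : ℝ) {d : ℕ} {f g : Dom d → ℂ}
    (hf : MemLp f 2 volume) (hg : MemLp g 2 volume)
    (hf' : eLpNorm f ⊤ volume < 1 / 2) (hg' : eLpNorm g ⊤ volume < 1 / 2) :
    GeomDecay fun m => Sker c d f g m / (m ! : ℂ) ^ 2 := by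
  obtain ⟨s, hs0, hfgs, hs⟩ := ENNReal.lt_iff_exists_real_btwn.1 (max_lt hf' hg')
  replace hs : s < 1 / 2 := by
    simpa using (ENNReal.ofReal_lt_iff_lt_toReal hs0 (by simp)).1 hs
  have hfs := ae_norm_le_of_eLpNorm_top_le hs0 ((le_max_left _ _).trans hfgs.le)
  have hgs := ae_norm_le_of_eLpNorm_top_le hs0 ((le_max_right _ _).trans hfgs.le)
  have hfg : Integrable (fun x => ‖f x‖ * ‖g x‖) := hf.norm.integrable_mul hg.norm
  set M := ∫ x, ‖f x‖ * ‖g x‖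
  set σ := (s + 1 / 2) / 2 with hσ
  have hx : ∀ i : ℕ,
      ‖(c : ℂ) * pip d f g (i + 1) / ((i + 1 : ℕ) : ℂ)‖ ≤ |c| * M * (s ^ 2) ^ i := by
    intro i
    rw [norm_div, norm_mul, Complex.norm_real, Real.norm_eq_abs, Complex.norm_natCast,
      mul_assoc]
    refine (div_le_self (by positivity) (by simp)).trans ?_
    gcongr
    exact norm_pip_succ_le hfs hgs hfg i
  refine ⟨Real.exp (|c| * M / (σ ^ 2 - s ^ 2)), 4 * σ ^ 2, by positivity, by nlinarith,
    fun n => ?_⟩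
  have hfact : (n ! : ℂ) ^ 2 ≠ 0 := pow_ne_zero 2 (Nat.cast_ne_zero.2 n.factorial_ne_zero)
  calc ‖Sker c d f g n / (n ! : ℂ) ^ 2‖
      = 2 ^ (2 * n - 1) * ‖partitionSum n fun j => (c : ℂ) * pip d f g j / j‖ := by
        rw [Sker_eq_partitionSum, mul_div_right_comm, mul_div_cancel_left₀ _ hfact, norm_mul,
          norm_pow, Complex.norm_ofNat]
    _ ≤ 4 ^ n * ((σ ^ 2) ^ n * Real.exp (|c| * M / (σ ^ 2 - s ^ 2))) := by
        gcongr
        · calc (2 : ℝ) ^ (2 * n - 1) ≤ 2 ^ (2 * n) := pow_le_pow_right₀ one_le_two (by omega)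
            _ = 4 ^ n := by rw [pow_mul]; norm_num
        · exact norm_partitionSum_le_of_le_geometric n (by positivity) (by nlinarith) hx
    _ = Real.exp (|c| * M / (σ ^ 2 - s ^ 2)) * (4 * σ ^ 2) ^ n := by rw [mul_pow]; ring

theorem statement4 (d : ℕ) (c : ℝ)
    (f g : Dom d → ℂ) (hf : MemA d f) (hg : MemA d g)
    (hf' : eLpNorm f ⊤ (volume : Measure (Dom d)) < 1 / 2)
    (hg' : eLpNorm g ⊤ (volume : Measure (Dom d)) < 1 / 2)
    (G : ℝ → ℂ)
    (hG : G = fun t : ℝ => ∑' m : ℕ, (t : ℂ) ^ m * Sker c d f g m / (m ! : ℂ) ^ 2) :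
    (∀ t ∈ Set.Icc (0 : ℝ) 1,
      Summable (fun m : ℕ => ‖(t : ℂ) ^ m * Sker c d f g m / (m ! : ℂ) ^ 2‖)) ∧
    (∀ n : ℕ, 1 ≤ n →
      DifferentiableOn ℝ (iteratedDerivWithin (n - 1) G (Set.Icc (0 : ℝ) 1))
        (Set.Icc (0 : ℝ) 1)) ∧
    (∀ n : ℕ, 1 ≤ n → ∀ t ∈ Set.Icc (0 : ℝ) 1,
      iteratedDerivWithin n G (Set.Icc (0 : ℝ) 1) t =
        ∑' m : ℕ, (t : ℂ) ^ m * Sker c d f g (m + n) / (((m + n)! : ℂ) * (m ! : ℂ))) ∧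
    (∀ n : ℕ, 1 ≤ n →
      Sker c d f g n = (n ! : ℂ) * iteratedDerivWithin n G (Set.Icc (0 : ℝ) 1) 0) := by
  set b : ℕ → ℂ := fun m => Sker c d f g m / (m ! : ℂ) ^ 2
  have hb : GeomDecay b := geomDecay_Sker_div_factorial_sq c hf.1 hg.1 hf' hg'
  have hGb : G = evalSeries b := hG ▸ funext fun t => tsum_congr fun m => mul_div_assoc _ _ _
  have hI : Set.Icc (0 : ℝ) 1 ⊆ Set.Icc (-1) 1 := Set.Icc_subset_Icc (by norm_num) le_rfl
  have hderiv := hb.iteratedDerivWithin_evalSeries (uniqueDiffOn_Icc zero_lt_one) hI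
  have hcoeff : ∀ n m, derivCoeffs^[n] b m = Sker c d f g (m + n) / ((m + n)! * m !) := by
    intro n m
    rw [iterate_derivCoeffs_apply]
    simp only [b]
    field_simp
  refine ⟨fun t ht => ?_, fun n _ => ?_, fun n _ t ht => ?_, fun n _ => ?_⟩
  · simpa [b, mul_div_assoc] using hb.summable_norm (x := t) (by simpa [abs_le] using hI ht)
  · rw [hGb]
    refine DifferentiableOn.congr (fun t ht => ?_) (hderiv (n - 1))
    exact ((hb.iterate_derivCoeffs _).hasDerivAt_evalSeries
      (abs_le.2 (hI ht))).differentiableAt.differentiableWithinAt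
  · rw [hGb, hderiv n ht, evalSeries]
    exact tsum_congr fun m => by rw [hcoeff, mul_div_assoc]
  · rw [hGb, hderiv n ⟨le_rfl, zero_le_one⟩, evalSeries_zero, hcoeff, zero_add,
      Nat.factorial_zero, Nat.cast_one, mul_one,
      mul_div_cancel₀ _ (Nat.cast_ne_zero.2 n.factorial_ne_zero)]
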